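/- Let n ≥ 1 and let W ⊂ Λ²(ℝ^{2n}) be the span of the vectors {x_i ∧ x_j - y_i ∧ y_j : 1 ≤ i < j ≤ n} ∪ {x_i ∧ y_j - x_j ∧ y_i : 1 ≤ i < j ≤ n}, where x_1,…,x_n,y_1,…,y_n is the standard basis of ℝ^{2n}. Then dim W = n(n-1), and an element A = Σ a_{ij} x_i∧x_j + Σ b_{ij} x_i∧y_j + Σ c_{ij} y_i∧y_j lies in W if and only if a_{ij} + c_{ij} = a_{ji} + c_{ji} and b_{ij} + b_{ji} = 0 for all i,j (with a, c extended antisymmetrically). -/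

import Mathlib

/-- The wedge product v ∧ w of two vectors, inside the exterior algebra of ℝ^{2n}. -/
noncomputable def wdg (n : ℕ) (v w : Fin (n + n) → ℝ) :
    ExteriorAlgebra ℝ (Fin (n + n) → ℝ) :=
  ExteriorAlgebra.ι ℝ v * ExteriorAlgebra.ι ℝ w

/-!
Put `z_k = x_k + i y_k`. The generators `x_i ∧ x_j - y_i ∧ y_j` and `x_i ∧ y_j - x_j ∧ y_i` are the
real and imaginary parts of `z_i ∧ z_j`. For `i < j` they are dual to the functionals reading off
the coefficients of `x_i ∧ x_j` and `x_i ∧ y_j`, hence linearly independent, and `dim W = 2 C(n,2)`.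
Every generator is killed by `A ↦ A(x_i, x_j) + A(y_i, y_j)` and `A ↦ A(x_i, y_j) + A(x_j, y_i)`
(the elements of `W` are anti-invariant under the complex structure), which gives the two
conditions. Conversely, under them `c = -a` and `b` is antisymmetric, so that
`A = Σ a_ij Re(z_i ∧ z_j) + ½ Σ b_ij Im(z_i ∧ z_j)`.
-/

open ExteriorAlgebra

section WedgeDual

variable {R M : Type*} [CommRing R] [AddCommGroup M] [Module R M]

noncomputable def wedgeDual (f g : Module.Dual R M) : Module.Dual R (ExteriorAlgebra R M) :=
  liftAlternating <|
    Function.update 0 2 (Matrix.detRowAlternating.compLinearMap (LinearMap.pi ![f, g]))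

@[simp]
theorem wedgeDual_ι_mul_ι (f g : Module.Dual R M) (v w : M) :
    wedgeDual f g (ι R v * ι R w) = f v * g w - g v * f w := by
  rw [wedgeDual, liftAlternating_ι_mul, liftAlternating_ι]
  simp only [Function.update_self, AlternatingMap.curryLeft_apply_apply,
    AlternatingMap.compLinearMap_apply]
  exact (Matrix.det_fin_two _).trans (by simp)

end WedgeDual

abbrev LtPairs (n : ℕ) := {p : Fin n × Fin n // p.1 < p.2}

theorem two_mul_card_ltPairs (n : ℕ) : 2 * Fintype.card (LtPairs n) = n * (n - 1) := by
  rw [Fintype.card_subtype, Fintype.card_product_filter_lt, Fintype.card_fin,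
    Nat.choose_two_right, Nat.mul_div_cancel' (Nat.even_mul_pred_self n).two_dvd]

namespace ComplexWedge

variable {R M : Type*} [CommRing R] [AddCommGroup M] [Module R M] {n : ℕ}
  (e : Module.Basis (Fin n ⊕ Fin n) R M)

noncomputable def reWedge (i j : Fin n) : ExteriorAlgebra R M :=
  ι R (e (.inl i)) * ι R (e (.inl j)) - ι R (e (.inr i)) * ι R (e (.inr j))

noncomputable def imWedge (i j : Fin n) : ExteriorAlgebra R M :=
  ι R (e (.inl i)) * ι R (e (.inr j)) - ι R (e (.inl j)) * ι R (e (.inr i))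

noncomputable def coordWedge (k l : Fin n ⊕ Fin n) : Module.Dual R (ExteriorAlgebra R M) :=
  wedgeDual (e.coord k) (e.coord l)

@[simp]
theorem coordWedge_ι_mul_ι (k l p q : Fin n ⊕ Fin n) :
    coordWedge e k l (ι R (e p) * ι R (e q)) =
      (if p = k then 1 else 0) * (if q = l then 1 else 0)
        - (if p = l then 1 else 0) * (if q = k then 1 else 0) := by
  simp [coordWedge, Finsupp.single_apply]

noncomputable def reImWedge : LtPairs n ⊕ LtPairs n → ExteriorAlgebra R M :=
  Sum.elim (fun p ↦ reWedge e p.1.1 p.1.2) (fun p ↦ imWedge e p.1.1 p.1.2)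

noncomputable def reImCoord : LtPairs n ⊕ LtPairs n → Module.Dual R (ExteriorAlgebra R M) :=
  Sum.elim (fun p ↦ coordWedge e (.inl p.1.1) (.inl p.1.2))
    (fun p ↦ coordWedge e (.inl p.1.1) (.inr p.1.2))

theorem reImCoord_reImWedge (s t : LtPairs n ⊕ LtPairs n) :
    reImCoord e s (reImWedge e t) = if s = t then 1 else 0 := by
  rcases s with ⟨⟨p, q⟩, hpq⟩ | ⟨⟨p, q⟩, hpq⟩ <;> rcases t with ⟨⟨k, l⟩, hkl⟩ | ⟨⟨k, l⟩, hkl⟩ <;>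
    simp only [reImCoord, reImWedge, reWedge, imWedge, Sum.elim_inl, Sum.elim_inr, map_sub,
      coordWedge_ι_mul_ι, Sum.inl.injEq, Sum.inr.injEq, reduceCtorEq, mul_ite,
      mul_one, mul_zero, ↓reduceIte, ite_self, sub_self, sub_zero, Subtype.mk.injEq, Prod.mk.injEq]
  all_goals grind

theorem linearIndependent_reImWedge : LinearIndependent R (reImWedge e) :=
  .of_pairwise_dual_eq_zero_one _ (reImCoord e)
    (fun _ _ hst ↦ by simp [reImCoord_reImWedge, hst]) (fun _ ↦ by simp [reImCoord_reImWedge])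

def reImSpan : Submodule R (ExteriorAlgebra R M) :=
  Submodule.span R
    ({v | ∃ i j, i < j ∧ v = reWedge e i j} ∪ {v | ∃ i j, i < j ∧ v = imWedge e i j})

theorem range_reImWedge :
    Set.range (reImWedge e) =
      {v | ∃ i j, i < j ∧ v = reWedge e i j} ∪ {v | ∃ i j, i < j ∧ v = imWedge e i j} := by
  ext v
  constructor
  · rintro ⟨⟨⟨i, j⟩, h⟩ | ⟨⟨i, j⟩, h⟩, rfl⟩
    exacts [.inl ⟨i, j, h, rfl⟩, .inr ⟨i, j, h, rfl⟩]
  · rintro (⟨i, j, h, rfl⟩ | ⟨i, j, h, rfl⟩)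
    exacts [⟨.inl ⟨(i, j), h⟩, rfl⟩, ⟨.inr ⟨(i, j), h⟩, rfl⟩]

theorem finrank_reImSpan [Nontrivial R] : Module.finrank R (reImSpan e) = n * (n - 1) := by
  rw [reImSpan, ← range_reImWedge, finrank_span_eq_card (linearIndependent_reImWedge e),
    Fintype.card_sum, ← two_mul, two_mul_card_ltPairs]

theorem reWedge_swap (i j : Fin n) : reWedge e j i = -reWedge e i j := by
  rw [reWedge, reWedge, eq_neg_of_add_eq_zero_left (ι_add_mul_swap (e (.inl j)) _),
    eq_neg_of_add_eq_zero_left (ι_add_mul_swap (e (.inr j)) _)]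
  abel

theorem imWedge_swap (i j : Fin n) : imWedge e j i = -imWedge e i j :=
  (neg_sub _ _).symm

theorem reWedge_mem_reImSpan (i j : Fin n) : reWedge e i j ∈ reImSpan e := by
  rcases lt_trichotomy i j with h | rfl | h
  · exact Submodule.subset_span (.inl ⟨i, j, h, rfl⟩)
  · simp [reWedge]
  · rw [← neg_neg (reWedge e i j), ← reWedge_swap]
    exact neg_mem (Submodule.subset_span (.inl ⟨j, i, h, rfl⟩))

theorem imWedge_mem_reImSpan (i j : Fin n) : imWedge e i j ∈ reImSpan e := by
  rcases lt_trichotomy i j with h | rfl | h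
  · exact Submodule.subset_span (.inr ⟨i, j, h, rfl⟩)
  · simp [imWedge]
  · rw [← neg_neg (imWedge e i j), ← imWedge_swap]
    exact neg_mem (Submodule.subset_span (.inr ⟨j, i, h, rfl⟩))

theorem reImSpan_le_ker (p q : Fin n) :
    reImSpan e ≤ LinearMap.ker
      ((coordWedge e (.inl p) (.inl q) + coordWedge e (.inr p) (.inr q)).prod
        (coordWedge e (.inl p) (.inr q) + coordWedge e (.inl q) (.inr p))) := by
  refine Submodule.span_le.2 ?_
  rintro _ (⟨k, l, -, rfl⟩ | ⟨k, l, -, rfl⟩) <;>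
    simp only [reWedge, imWedge, LinearMap.ker_prod, Submodule.coe_inf, Set.mem_inter_iff,
      SetLike.mem_coe, LinearMap.mem_ker, LinearMap.add_apply, map_sub, coordWedge_ι_mul_ι,
      Sum.inl.injEq, Sum.inr.injEq, reduceCtorEq, ↓reduceIte, mul_ite, mul_one, mul_zero]
  all_goals grind

noncomputable def twoForm (a b c : Fin n → Fin n → R) : ExteriorAlgebra R M :=
  ∑ i, ∑ j, (a i j • (ι R (e (.inl i)) * ι R (e (.inl j)))
    + b i j • (ι R (e (.inl i)) * ι R (e (.inr j))) + c i j • (ι R (e (.inr i)) * ι R (e (.inr j))))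

variable (a b c : Fin n → Fin n → R)

theorem coordWedge_inl_inl_twoForm (p q : Fin n) :
    coordWedge e (.inl p) (.inl q) (twoForm e a b c) = a p q - a q p := by
  simp [twoForm, mul_ite, mul_sub, Finset.sum_sub_distrib]

theorem coordWedge_inr_inr_twoForm (p q : Fin n) :
    coordWedge e (.inr p) (.inr q) (twoForm e a b c) = c p q - c q p := by
  simp [twoForm, mul_ite, mul_sub, Finset.sum_sub_distrib]

theorem coordWedge_inl_inr_twoForm (p q : Fin n) :
    coordWedge e (.inl p) (.inr q) (twoForm e a b c) = b p q := by
  simp [twoForm, mul_ite]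

theorem sum_smul_imWedge (hb : ∀ i j, b i j + b j i = 0) :
    ∑ i, ∑ j, b i j • imWedge e i j =
      (2 : R) • ∑ i, ∑ j, b i j • (ι R (e (.inl i)) * ι R (e (.inr j))) := by
  have hb' : ∀ i j, b i j - b j i = 2 * b i j := fun i j ↦ by linear_combination -hb i j
  simp only [imWedge, smul_sub, Finset.sum_sub_distrib]
  rw [Finset.sum_comm (f := fun i j ↦ b i j • (ι R (e (.inl j)) * ι R (e (.inr i))))]
  simp only [← Finset.sum_sub_distrib, ← sub_smul, hb', Finset.smul_sum, smul_smul]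

theorem twoForm_mem_reImSpan [Invertible (2 : R)] (hac : ∀ i j, a i j + c i j = 0)
    (hb : ∀ i j, b i j + b j i = 0) : twoForm e a b c ∈ reImSpan e := by
  have hdecomp : twoForm e a b c =
      ∑ i, ∑ j, a i j • reWedge e i j + ⅟(2 : R) • ∑ i, ∑ j, b i j • imWedge e i j := by
    have hc : ∀ i j, c i j = -a i j := fun i j ↦ eq_neg_of_add_eq_zero_right (hac i j)
    simp only [sum_smul_imWedge e b hb, smul_smul, invOf_mul_self, one_smul, twoForm, reWedge, hc,
      neg_smul, smul_sub, Finset.sum_add_distrib, Finset.sum_sub_distrib, Finset.sum_neg_distrib]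
    abel
  rw [hdecomp]
  exact add_mem (Submodule.sum_mem _ fun i _ ↦ Submodule.sum_mem _ fun j _ ↦
      Submodule.smul_mem _ _ (reWedge_mem_reImSpan e i j))
    (Submodule.smul_mem _ _ (Submodule.sum_mem _ fun i _ ↦ Submodule.sum_mem _ fun j _ ↦
      Submodule.smul_mem _ _ (imWedge_mem_reImSpan e i j)))

theorem twoForm_mem_reImSpan_iff [Invertible (2 : R)] (ha : ∀ i j, a i j = -a j i)
    (hc : ∀ i j, c i j = -c j i) :
    twoForm e a b c ∈ reImSpan e ↔ ∀ i j, a i j + c i j = a j i + c j i ∧ b i j + b j i = 0 := by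
  constructor
  · intro hA i j
    have h := reImSpan_le_ker e i j hA
    simp only [LinearMap.mem_ker, LinearMap.prod_apply, Function.prod_apply, LinearMap.add_apply,
      Prod.mk_eq_zero, coordWedge_inl_inl_twoForm, coordWedge_inr_inr_twoForm,
      coordWedge_inl_inr_twoForm] at h
    exact ⟨by linear_combination h.1, h.2⟩
  · intro h
    refine twoForm_mem_reImSpan e a b c (fun i j ↦ ?_) (fun i j ↦ (h i j).2)
    have h2 : (2 : R) * (a i j + c i j) = 0 := by linear_combination (h i j).1 + ha i j + hc i j
    exact (isUnit_of_invertible 2).mul_right_eq_zero.1 h2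

end ComplexWedge

open ComplexWedge

theorem stmt5_general (n : ℕ)
    (x y : Fin n → Fin (n + n) → ℝ)
    (hx : ∀ i, x i = Pi.single (Fin.castAdd n i) 1)
    (hy : ∀ i, y i = Pi.single (Fin.natAdd n i) 1)
    (W : Submodule ℝ (ExteriorAlgebra ℝ (Fin (n + n) → ℝ)))
    (hW : W = Submodule.span ℝ
      ({v | ∃ i j : Fin n, i < j ∧ v = wdg n (x i) (x j) - wdg n (y i) (y j)} ∪
       {v | ∃ i j : Fin n, i < j ∧ v = wdg n (x i) (y j) - wdg n (x j) (y i)})) :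
    Module.finrank ℝ W = n * (n - 1) ∧
    ∀ a b c : Fin n → Fin n → ℝ,
      (∀ i j, a i j = - a j i) → (∀ i j, c i j = - c j i) →
      ((∑ i, ∑ j, (a i j • wdg n (x i) (x j) + b i j • wdg n (x i) (y j)
          + c i j • wdg n (y i) (y j))) ∈ W ↔
        ∀ i j, a i j + c i j = a j i + c j i ∧ b i j + b j i = 0) := by
  set e := (Pi.basisFun ℝ (Fin (n + n))).reindex finSumFinEquiv.symm
  obtain rfl : x = fun i ↦ e (.inl i) := funext fun i ↦ by simp [e, hx]
  obtain rfl : y = fun i ↦ e (.inr i) := funext fun i ↦ by simp [e, hy]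
  subst hW
  exact ⟨finrank_reImSpan e, fun a b c ↦ twoForm_mem_reImSpan_iff e a b c⟩

/-- the span W of {xᵢ∧xⱼ - yᵢ∧yⱼ, xᵢ∧yⱼ - xⱼ∧yᵢ : i < j} in Λ²(ℝ^{2n}) has
dimension n(n-1), and an element Σ aᵢⱼ xᵢ∧xⱼ + bᵢⱼ xᵢ∧yⱼ + cᵢⱼ yᵢ∧yⱼ (with a, c extended
antisymmetrically) lies in W iff aᵢⱼ + cᵢⱼ = aⱼᵢ + cⱼᵢ and bᵢⱼ + bⱼᵢ = 0 for all i, j. -/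
theorem stmt5 (n : ℕ) (hn : 1 ≤ n)
    (x y : Fin n → Fin (n + n) → ℝ)
    (hx : ∀ i, x i = Pi.single (Fin.castAdd n i) 1)
    (hy : ∀ i, y i = Pi.single (Fin.natAdd n i) 1)
    (W : Submodule ℝ (ExteriorAlgebra ℝ (Fin (n + n) → ℝ)))
    (hW : W = Submodule.span ℝ
      ({v | ∃ i j : Fin n, i < j ∧ v = wdg n (x i) (x j) - wdg n (y i) (y j)} ∪
       {v | ∃ i j : Fin n, i < j ∧ v = wdg n (x i) (y j) - wdg n (x j) (y i)})) :
    Module.finrank ℝ W = n * (n - 1) ∧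
    ∀ a b c : Fin n → Fin n → ℝ,
      (∀ i j, a i j = - a j i) → (∀ i j, c i j = - c j i) →
      ((∑ i, ∑ j, (a i j • wdg n (x i) (x j) + b i j • wdg n (x i) (y j)
          + c i j • wdg n (y i) (y j))) ∈ W ↔
        ∀ i j, a i j + c i j = a j i + c j i ∧ b i j + b j i = 0) :=
  stmt5_general n x y hx hy W hW
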